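/- Let μ be a probability measure on F_m, fix 1 ≤ i ≤ m, and suppose that the singleton {a_i} is an a_i-barrier. Then F_μ(e, a_i^k) = F_μ(e, a_i)^k for every integer k ≥ 1. -/

import Mathlib

open scoped BigOperators

/-- Restricted first-passage function `F_μ(x, y; S)`: the total weight of paths from `x`
to `y` that avoid `S ∪ {y}` before arriving at `y`. -/
noncomputable def FP {G : Type*} [Group G] (μ : G → ℝ) (x y : G) (S : Set G) : ℝ :=
  ∑' k : ℕ,
    ∑' f : {f : Fin (k + 1) → G // f 0 = x ∧ f (Fin.last k) = y ∧
        ∀ j : Fin k, f j.castSucc ∉ S ∪ {y}},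
      ∏ j : Fin k, μ ((f.1 j.castSucc)⁻¹ * f.1 j.succ)

/-- `μ` is a probability measure on `G`. -/
def IsProb {G : Type*} (μ : G → ℝ) : Prop := (∀ g, 0 ≤ μ g) ∧ ∑' g, μ g = 1

/-- Word length in the free group on `Fin m` w.r.t. the generators and their inverses. -/
def wl {m : ℕ} (g : FreeGroup (Fin m)) : ℕ := g.toWord.length

/-- The shadow `C_fin(g) = {g·x : |g·x| = |g| + |x|}`. -/
def Cfin {m : ℕ} (g : FreeGroup (Fin m)) : Set (FreeGroup (Fin m)) :=
  {h | ∃ x, h = g * x ∧ wl (g * x) = wl g + wl x}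

/-- `B` is a `g`-barrier: no path from `e` can reach the shadow of `g` avoiding `B`. -/
def IsBarrier {m : ℕ} (μ : FreeGroup (Fin m) → ℝ) (g : FreeGroup (Fin m))
    (B : Set (FreeGroup (Fin m))) : Prop :=
  ∀ h ∈ Cfin g, FP μ 1 h B = 0


/-
Weigh first-passage paths in `ℝ≥0∞`. Cutting a path from `x` to `y` at its first visit to `z ≠ y`
gives `F(x, y; S) = F(x, y; S ∪ {z}) + F(x, z; S ∪ {y}) F(z, y; S)`. If the paths from `x` to `y`
avoiding `z` have weight zero, this identity and its instance with `y` and `z` exchanged give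
`F(x, y) = F(x, z) F(z, y)`. For `z = a` and `y = a ^ (j + 1)` the barrier provides exactly this,
and left translation by `a` turns `F(a, a ^ (j + 1))` into `F(1, a ^ j)`; induction on `j` gives
the power law. First-passage paths form a prefix-free set of words, so under a probability their
total weight is at most `1`; hence all the real series converge and `FP` is the real part of the
`ℝ≥0∞` weight.
-/

open scoped ENNReal

section PrefixFree

variable {α : Type*}

theorem ENNReal.tsum_list_eq_add_tsum_cons (f : List α → ℝ≥0∞) :
    ∑' l, f l = f [] + ∑' a, ∑' l, f (a :: l) := by
  rw [ENNReal.tsum_eq_add_tsum_ite [], ← ENNReal.tsum_prod' (f := fun p => f (p.1 :: p.2))]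
  congr 1
  have hcons : Function.Injective fun p : α × List α => p.1 :: p.2 := fun p q h => by
    simpa [Prod.ext_iff] using h
  rw [← hcons.tsum_eq]
  · simp
  · rintro (_ | ⟨a, l⟩) h
    · simp at h
    · exact ⟨(a, l), rfl⟩

def PrefixFree (P : Set (List α)) : Prop :=
  ∀ l₁ ∈ P, ∀ l₂ ∈ P, l₁ <+: l₂ → l₁ = l₂

lemma PrefixFree.mono {P Q : Set (List α)} (hP : PrefixFree P) (hQ : Q ⊆ P) : PrefixFree Q :=
  fun _ h₁ _ h₂ => hP _ (hQ h₁) _ (hQ h₂)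

lemma PrefixFree.cons {P : Set (List α)} (hP : PrefixFree P) (a : α) :
    PrefixFree {l | a :: l ∈ P} :=
  fun _ h₁ _ h₂ h => List.cons_injective (hP _ h₁ _ h₂ (List.cons_prefix_cons.2 ⟨rfl, h⟩))

lemma PrefixFree.eq_singleton_nil {P : Set (List α)} (hP : PrefixFree P) (h : [] ∈ P) :
    P = {[]} :=
  Set.eq_singleton_iff_unique_mem.2 ⟨h, fun _ hl => (hP _ h _ hl List.nil_prefix).symm⟩

variable {ν : α → ℝ≥0∞}

lemma PrefixFree.tsum_indicator_le_one_of_length_le (hν : ∑' a, ν a = 1) {N : ℕ}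
    {P : Set (List α)} (hP : PrefixFree P) (hN : ∀ l ∈ P, l.length ≤ N) :
    ∑' l, P.indicator (fun l => (l.map ν).prod) l ≤ 1 := by
  induction N generalizing P with
  | zero =>
    calc _ ≤ ∑' l, ({[]} : Set (List α)).indicator (fun l => (l.map ν).prod) l :=
          ENNReal.tsum_le_tsum (Set.indicator_le_indicator_of_subset
            (fun l hl => List.length_eq_zero_iff.1 (Nat.le_zero.1 (hN l hl))) fun _ => zero_le)
      _ = 1 := by simp [Set.indicator]
  | succ N ih =>
    rw [ENNReal.tsum_list_eq_add_tsum_cons]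
    by_cases hnil : [] ∈ P
    · simp [hP.eq_singleton_nil hnil, Set.indicator]
    have hcons (a : α) (l : List α) : P.indicator (fun l => (l.map ν).prod) (a :: l) =
        ν a * {l | a :: l ∈ P}.indicator (fun l => (l.map ν).prod) l := by
      by_cases h : a :: l ∈ P <;> simp [Set.indicator, h]
    calc _ = ∑' a, ν a * ∑' l, {l | a :: l ∈ P}.indicator (fun l => (l.map ν).prod) l := by
            simp only [Set.indicator_of_notMem hnil, zero_add, hcons, ENNReal.tsum_mul_left]
      _ ≤ ∑' a, ν a * 1 := by
            gcongr with a
            exact ih (hP.cons a) fun l hl => by simpa using hN _ hl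
      _ = 1 := by simp [hν]

theorem PrefixFree.tsum_prod_map_le_one (hν : ∑' a, ν a = 1) {P : Set (List α)}
    (hP : PrefixFree P) : ∑' l : P, (l.1.map ν).prod ≤ 1 := by
  classical
  rw [tsum_subtype P (fun l => (l.map ν).prod), ENNReal.tsum_eq_iSup_sum]
  refine iSup_le fun s => ?_
  rw [sum_eq_tsum_indicator, Set.indicator_indicator]
  exact (hP.mono Set.inter_subset_right).tsum_indicator_le_one_of_length_le hν
    (N := s.sup List.length) fun l hl => Finset.le_sup hl.1

end PrefixFree

section FirstPassage

open scoped Pointwise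

variable {G : Type*} [Group G] (ν : G → ℝ≥0∞) {x y z : G} {S : Set G}

-- A path is encoded by its list of increments `l`: at time `n` it is at `x * (l.take n).prod`.
def firstPassagePaths (x y : G) (S : Set G) : Set (List G) :=
  {l | x * l.prod = y ∧ ∀ n < l.length, x * (l.take n).prod ∉ S ∪ {y}}

noncomputable def firstPassage (x y : G) (S : Set G) : ℝ≥0∞ :=
  ∑' l : firstPassagePaths x y S, (l.1.map ν).prod

lemma prefixFree_firstPassagePaths (x y : G) (S : Set G) :
    PrefixFree (firstPassagePaths x y S) := by
  intro l₁ h₁ l₂ h₂ h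
  by_contra hne
  have hlt : l₁.length < l₂.length :=
    lt_of_le_of_ne h.length_le fun hl => hne (h.eq_of_length hl)
  refine h₂.2 _ hlt (Or.inr ?_)
  rw [← List.prefix_iff_eq_take.1 h]
  exact h₁.1

theorem firstPassage_le_one (hν : ∑' g, ν g = 1) (x y : G) (S : Set G) :
    firstPassage ν x y S ≤ 1 :=
  (prefixFree_firstPassagePaths x y S).tsum_prod_map_le_one hν

theorem firstPassage_mul_left (g x y : G) (S : Set G) :
    firstPassage ν (g * x) (g * y) (g • S) = firstPassage ν x y S := by
  have : firstPassagePaths (g * x) (g * y) (g • S) = firstPassagePaths x y S := by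
    ext l
    simp [firstPassagePaths, mul_assoc, Set.mem_smul_set_iff_inv_smul_mem]
  rw [firstPassage, this, firstPassage]

lemma append_mem_firstPassagePaths {t r : List G} (ht : t ∈ firstPassagePaths x z (S ∪ {y}))
    (hr : r ∈ firstPassagePaths z y S) : t ++ r ∈ firstPassagePaths x y S := by
  refine ⟨by rw [List.prod_append, ← mul_assoc, ht.1, hr.1], fun n hn => ?_⟩
  rcases lt_or_ge n t.length with hnt | htn
  · rw [List.take_append_of_le_length hnt.le]
    exact fun hmem => ht.2 n hnt (Or.inl hmem)
  · obtain ⟨m, rfl⟩ := Nat.exists_eq_add_of_le htn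
    rw [List.take_length_add_append, List.prod_append, ← mul_assoc, ht.1]
    exact hr.2 m (by simp at hn; omega)

lemma append_notMem_firstPassagePaths_union {t r : List G} (hzy : z ≠ y)
    (ht : t ∈ firstPassagePaths x z (S ∪ {y})) (hr : r ∈ firstPassagePaths z y S) :
    t ++ r ∉ firstPassagePaths x y (S ∪ {z}) := by
  have hr₀ : 0 < r.length := List.length_pos_iff.2 fun h => hzy (by simpa [h] using hr.1)
  refine fun h => h.2 t.length (by simp; omega) (Or.inl (Or.inr ?_))
  simpa using ht.1

lemma exists_append_of_mem_firstPassagePaths {l : List G} (hl : l ∈ firstPassagePaths x y S)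
    (hz : l ∉ firstPassagePaths x y (S ∪ {z})) :
    ∃ t ∈ firstPassagePaths x z (S ∪ {y}), ∃ r ∈ firstPassagePaths z y S, t ++ r = l := by
  classical
  have hhit : ∃ n, n < l.length ∧ x * (l.take n).prod = z := by
    have hz' : ¬∀ n < l.length, x * (l.take n).prod ∉ S ∪ {z} ∪ {y} := fun h => hz ⟨hl.1, h⟩
    push Not at hz'
    obtain ⟨n, hn, (hmem | hmem) | hmem⟩ := hz'
    · exact absurd (Or.inl hmem) (hl.2 n hn)
    · exact ⟨n, hn, hmem⟩
    · exact absurd (Or.inr hmem) (hl.2 n hn)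
  obtain ⟨hn, hnz⟩ := Nat.find_spec hhit
  set n := Nat.find hhit
  refine ⟨l.take n, ⟨by simpa using hnz, fun m hm hmem => ?_⟩, l.drop n, ⟨?_, fun m hm => ?_⟩,
    List.take_append_drop n l⟩
  · have hmn : m < n := by simp at hm; omega
    rw [List.take_take, min_eq_left hmn.le] at hmem
    rcases hmem with hmem | hmem
    · exact hl.2 m (hmn.trans hn) hmem
    · exact Nat.find_min hhit hmn ⟨hmn.trans hn, hmem⟩
  · rw [← hnz, mul_assoc, List.prod_take_mul_prod_drop]
    exact hl.1
  · rw [← hnz, mul_assoc, ← List.prod_append, ← List.take_add]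
    exact hl.2 _ (by simp at hm; omega)

theorem firstPassage_eq_add_mul (hzy : z ≠ y) :
    firstPassage ν x y S =
      firstPassage ν x y (S ∪ {z}) + firstPassage ν x z (S ∪ {y}) * firstPassage ν z y S := by
  set glue := fun p : firstPassagePaths x z (S ∪ {y}) × firstPassagePaths z y S => p.1.1 ++ p.2.1
  have hglue : Function.Injective glue := by
    rintro ⟨⟨t, ht⟩, ⟨r, hr⟩⟩ ⟨⟨t', ht'⟩, ⟨r', hr'⟩⟩ (h : t ++ r = t' ++ r')
    have htt' : t = t' := by
      rcases List.prefix_or_prefix_of_prefix (List.prefix_append t r)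
        (h ▸ List.prefix_append t' r') with hp | hp
      · exact prefixFree_firstPassagePaths _ _ _ _ ht _ ht' hp
      · exact (prefixFree_firstPassagePaths _ _ _ _ ht' _ ht hp).symm
    subst htt'
    obtain rfl := List.append_cancel_left h
    rfl
  have hsplit : firstPassagePaths x y S = firstPassagePaths x y (S ∪ {z}) ∪ Set.range glue := by
    ext l
    refine ⟨fun hl => ?_, ?_⟩
    · by_cases hz : l ∈ firstPassagePaths x y (S ∪ {z})
      · exact Or.inl hz
      · obtain ⟨t, ht, r, hr, rfl⟩ := exists_append_of_mem_firstPassagePaths hl hz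
        exact Or.inr ⟨(⟨t, ht⟩, ⟨r, hr⟩), rfl⟩
    · rintro (⟨hl₁, hl₂⟩ | ⟨⟨⟨t, ht⟩, ⟨r, hr⟩⟩, rfl⟩)
      · exact ⟨hl₁, fun n hn hmem => hl₂ n hn (hmem.imp_left Or.inl)⟩
      · exact append_mem_firstPassagePaths ht hr
  have hdisj : Disjoint (firstPassagePaths x y (S ∪ {z})) (Set.range glue) := by
    rw [Set.disjoint_right]
    rintro _ ⟨⟨⟨t, ht⟩, ⟨r, hr⟩⟩, rfl⟩
    exact append_notMem_firstPassagePaths_union hzy ht hr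
  rw [firstPassage, hsplit,
    ENNReal.summable.tsum_union_disjoint (f := fun l => (l.map ν).prod) hdisj ENNReal.summable,
    tsum_range (fun l => (l.map ν).prod) hglue, ENNReal.tsum_prod']
  simp only [glue, List.map_append, List.prod_append, ENNReal.tsum_mul_left,
    ENNReal.tsum_mul_right]
  rfl

theorem firstPassage_eq_mul_of_eq_zero (hzy : z ≠ y) (h : firstPassage ν x y (S ∪ {z}) = 0) :
    firstPassage ν x y S = firstPassage ν x z S * firstPassage ν z y S := by
  have hy := firstPassage_eq_add_mul ν (x := x) (S := S) hzy
  have hz := firstPassage_eq_add_mul ν (x := x) (S := S) hzy.symm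
  rw [h, zero_add] at hy
  rw [h, zero_mul, add_zero] at hz
  rw [hy, hz]

theorem firstPassage_pow {a : G} (ha : ¬IsOfFinOrder a)
    (hbar : ∀ j, 2 ≤ j → firstPassage ν 1 (a ^ j) {a} = 0) {k : ℕ} (hk : 1 ≤ k) :
    firstPassage ν 1 (a ^ k) ∅ = firstPassage ν 1 a ∅ ^ k := by
  induction k, hk using Nat.le_induction with
  | base => simp
  | succ j hj ih =>
    have hne : a ≠ a ^ (j + 1) := by
      simpa using (injective_pow_iff_not_isOfFinOrder.2 ha).ne (show 1 ≠ j + 1 by omega)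
    have hshift : firstPassage ν a (a ^ (j + 1)) ∅ = firstPassage ν 1 (a ^ j) ∅ := by
      simpa [pow_succ'] using firstPassage_mul_left ν a 1 (a ^ j) ∅
    rw [firstPassage_eq_mul_of_eq_zero ν hne (by simpa using hbar (j + 1) (by omega)), hshift,
      ih, pow_succ']

end FirstPassage

section Increments

variable {G : Type*} [Group G] {x y : G} {S : Set G} {k : ℕ}

lemma ofFn_mem_firstPassagePaths_iff (s : Fin k → G) :
    List.ofFn s ∈ firstPassagePaths x y S ↔
      (x • Fin.partialProd s) (Fin.last k) = y ∧
        ∀ j : Fin k, (x • Fin.partialProd s) j.castSucc ∉ S ∪ {y} := by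
  simp [firstPassagePaths, Fin.partialProd, Fin.forall_iff, List.take_of_length_le]

lemma smul_partialProd_increments {f : Fin (k + 1) → G} (hf : f 0 = x) :
    x • Fin.partialProd (fun j : Fin k => (f j.castSucc)⁻¹ * f j.succ) = f :=
  hf ▸ Fin.partialProd_left_inv f

def incrementsEquiv (x y : G) (S : Set G) (k : ℕ) :
    {s : Fin k → G // List.ofFn s ∈ firstPassagePaths x y S} ≃
      {f : Fin (k + 1) → G // f 0 = x ∧ f (Fin.last k) = y ∧
        ∀ j : Fin k, f j.castSucc ∉ S ∪ {y}} where
  toFun s := ⟨x • Fin.partialProd s.1, by simp, (ofFn_mem_firstPassagePaths_iff s.1).1 s.2⟩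
  invFun f := ⟨fun j => (f.1 j.castSucc)⁻¹ * f.1 j.succ, by
    rw [ofFn_mem_firstPassagePaths_iff, smul_partialProd_increments f.2.1]
    exact f.2.2⟩
  left_inv s := Subtype.ext <| funext fun j => by simp [Fin.partialProd_right_inv]
  right_inv f := Subtype.ext (smul_partialProd_increments f.2.1)

theorem firstPassage_eq_tsum_paths (ν : G → ℝ≥0∞) (x y : G) (S : Set G) :
    firstPassage ν x y S =
    ∑' k : ℕ, ∑' f : {f : Fin (k + 1) → G // f 0 = x ∧ f (Fin.last k) = y ∧
        ∀ j : Fin k, f j.castSucc ∉ S ∪ {y}},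
      ∏ j : Fin k, ν ((f.1 j.castSucc)⁻¹ * f.1 j.succ) := by
  calc firstPassage ν x y S
      = ∑' l, (firstPassagePaths x y S).indicator (fun l => (l.map ν).prod) l :=
        tsum_subtype (firstPassagePaths x y S) (fun l => (l.map ν).prod)
    _ = ∑' p : Σ k, Fin k → G,
          (firstPassagePaths x y S).indicator (fun l => (l.map ν).prod) (List.ofFn p.2) :=
        (List.equivSigmaTuple.symm.tsum_eq _).symm
    _ = ∑' k, ∑' s : {s : Fin k → G // List.ofFn s ∈ firstPassagePaths x y S},
          ∏ j, ν (s.1 j) := by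
        rw [ENNReal.tsum_sigma']
        refine tsum_congr fun k => ?_
        refine (tsum_congr fun s => ?_).trans
          (tsum_subtype {s : Fin k → G | List.ofFn s ∈ firstPassagePaths x y S}
            fun s => ∏ j, ν (s j)).symm
        by_cases hs : List.ofFn s ∈ firstPassagePaths x y S <;>
          simp [Set.indicator, hs, List.prod_ofFn]
    _ = _ := tsum_congr fun k =>
        ((incrementsEquiv x y S k).symm.tsum_eq fun s => ∏ j, ν (s.1 j)).symm

end Increments

lemma IsProb.tsum_ofReal {α : Type*} {μ : α → ℝ} (hμ : IsProb μ) :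
    ∑' a, ENNReal.ofReal (μ a) = 1 := by
  have hsum : Summable μ := by
    by_contra h
    simpa [tsum_eq_zero_of_not_summable h] using hμ.2
  rw [← ENNReal.ofReal_tsum_of_nonneg hμ.1 hsum, hμ.2, ENNReal.ofReal_one]

section Real

variable {G : Type*} [Group G] {μ : G → ℝ}

theorem FP_eq_toReal_firstPassage (hμ : IsProb μ) (x y : G) (S : Set G) :
    FP μ x y S = (firstPassage (fun g => ENNReal.ofReal (μ g)) x y S).toReal := by
  set ν : G → ℝ≥0∞ := fun g => ENNReal.ofReal (μ g)
  have hfin (k : ℕ) : ∑' f : {f : Fin (k + 1) → G // f 0 = x ∧ f (Fin.last k) = y ∧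
      ∀ j : Fin k, f j.castSucc ∉ S ∪ {y}},
        ∏ j : Fin k, ν ((f.1 j.castSucc)⁻¹ * f.1 j.succ) ≠ ⊤ :=
    ne_top_of_le_ne_top ENNReal.one_ne_top <| (ENNReal.le_tsum k).trans <|
      (firstPassage_eq_tsum_paths ν x y S).symm.trans_le
        (firstPassage_le_one ν hμ.tsum_ofReal x y S)
  rw [firstPassage_eq_tsum_paths, ENNReal.tsum_toReal_eq hfin, FP]
  refine tsum_congr fun k => ?_
  rw [ENNReal.tsum_toReal_eq fun f => ENNReal.prod_ne_top fun j _ => ENNReal.ofReal_ne_top]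
  refine tsum_congr fun f => ?_
  simp [ENNReal.toReal_prod, ENNReal.toReal_ofReal (hμ.1 _)]

theorem FP_eq_zero_iff (hμ : IsProb μ) (x y : G) (S : Set G) :
    FP μ x y S = 0 ↔ firstPassage (fun g => ENNReal.ofReal (μ g)) x y S = 0 := by
  have hle := firstPassage_le_one _ hμ.tsum_ofReal x y S
  rw [FP_eq_toReal_firstPassage hμ, ENNReal.toReal_eq_zero_iff,
    or_iff_left (ne_top_of_le_ne_top ENNReal.one_ne_top hle)]

end Real

lemma FreeGroup.of_pow_mem_Cfin {m : ℕ} (i : Fin m) {k : ℕ} (hk : 1 ≤ k) :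
    FreeGroup.of i ^ k ∈ Cfin (FreeGroup.of i) := by
  have hpow : FreeGroup.of i * FreeGroup.of i ^ (k - 1) = FreeGroup.of i ^ k := by
    rw [← pow_succ', Nat.sub_add_cancel hk]
  refine ⟨FreeGroup.of i ^ (k - 1), hpow.symm, ?_⟩
  simp only [hpow, wl, FreeGroup.toWord_of_pow, FreeGroup.toWord_of, List.length_replicate,
    List.length_singleton]
  omega

/-- if the singleton `{a_i}` is an `a_i`-barrier, then the first-passage
function is multiplicative along powers of `a_i`. -/
theorem stmt16 {m : ℕ} (μ : FreeGroup (Fin m) → ℝ) (hμ : IsProb μ) (i : Fin m)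
    (hbar : IsBarrier μ (FreeGroup.of i) {FreeGroup.of i})
    (k : ℕ) (hk : 1 ≤ k) :
    FP μ 1 (FreeGroup.of i ^ k) ∅ = (FP μ 1 (FreeGroup.of i) ∅) ^ k := by
  have hzero (j : ℕ) (hj : 2 ≤ j) :
      firstPassage (fun g => ENNReal.ofReal (μ g)) 1 (FreeGroup.of i ^ j) {FreeGroup.of i} = 0 :=
    (FP_eq_zero_iff hμ _ _ _).1 (hbar _ (FreeGroup.of_pow_mem_Cfin i (by omega)))
  rw [FP_eq_toReal_firstPassage hμ, FP_eq_toReal_firstPassage hμ,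
    firstPassage_pow _ (not_isOfFinOrder_of_isMulTorsionFree (FreeGroup.of_ne_one i)) hzero hk,
    ENNReal.toReal_pow]
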